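/- arXiv:0710.5133 — 3 statements merged into one kernel-verified Lean document; each statement's English description precedes it below -/
import Mathlib

section
/- Let F(x,t) = Σ x^(m_n) t^(n + m_n), the sum ranging over all Ferrers diagrams (m_1, …, m_n), regarded as a formal power series in x and t over ℚ. Then (1 − t − x·t) · F(x,t) = x·t². Equivalently, for all integers p ≥ 2 and 1 ≤ m ≤ p − 1, the number of Ferrers diagrams with half-perimeter p and top row of width m is the binomial coefficient C(p−2, m−1). -/
/-- A Ferrers diagram, encoded as its (nonempty) list of row lengths, bottom row first:
positive entries, weakly increasing. -/
def IsFerrers (l : List ℕ) : Prop :=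
  l ≠ [] ∧ l.Pairwise (· ≤ ·) ∧ ∀ x ∈ l, 0 < x

/-- The width of the top row, `m_n`. -/
def topWidth (l : List ℕ) : ℕ := l.getLastD 0

/-- The half-perimeter of a Ferrers diagram: number of rows plus width of the top row. -/
def halfPerim (l : List ℕ) : ℕ := l.length + topWidth l

/-- The generating function `F(x,t) = Σ x^(m_n) t^(n+m_n)` over all Ferrers diagrams,
as a formal power series in the two variables `x` (index 0) and `t` (index 1): the
coefficient of `x^a t^p` is the number of Ferrers diagrams with top width `a` and
half-perimeter `p`. -/
noncomputable def F : MvPowerSeries (Fin 2) ℚ := fun e =>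
  (Nat.card {l : List ℕ // IsFerrers l ∧ topWidth l = e 0 ∧ halfPerim l = e 1} : ℚ)

/-!
Deleting the top row (of width `m`) from a Ferrers diagram with `n + 1` rows leaves a weakly
increasing list of `n` numbers in `[1, m]`, i.e. a multiset of size `n` drawn from `m` values.
Hence there are `multichoose m n = C(p - 2, m - 1)` diagrams with top width `m` and
half-perimeter `p = m + n + 1`, so `F = x t² Σ C(b, a) xᵃ tᵇ`, and Pascal's rule says exactly
that `1 - t - x t` inverts the series `Σ C(b, a) xᵃ tᵇ`.
-/

open Finset MvPowerSeries

theorem Finset.card_sym {α : Type*} [DecidableEq α] (s : Finset α) (n : ℕ) :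
    #(s.sym n) = s.card.multichoose n :=
  calc #(s.sym n) = #((s.attach.map (Function.Embedding.subtype _)).sym n) := by
        rw [attach_map_val]
    _ = Fintype.card (Sym s n) := by
        rw [sym_map, card_map, ← univ_eq_attach, sym_univ, card_univ]
    _ = s.card.multichoose n := by rw [Sym.card_sym_eq_multichoose, Fintype.card_coe]

def sortedListEquivSym (α : Type*) [LinearOrder α] (n : ℕ) :
    {l : List α // l.Pairwise (· ≤ ·) ∧ l.length = n} ≃ Sym α n where
  toFun l := ⟨l.1, by simpa using l.2.2⟩
  invFun t := ⟨(t : Multiset α).sort (· ≤ ·), Multiset.pairwise_sort _ _, by simp⟩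
  left_inv l := Subtype.ext (List.mergeSort_eq_self (· ≤ ·) l.2.1)
  right_inv t := Sym.coe_injective (Multiset.sort_eq (t : Multiset α) (· ≤ ·))

theorem card_sortedList_eq_multichoose {α : Type*} [LinearOrder α] (s : Finset α) (n : ℕ) :
    Nat.card {l : List α // l.Pairwise (· ≤ ·) ∧ l.length = n ∧ ∀ x ∈ l, x ∈ s}
      = s.card.multichoose n := by
  rw [← card_sym, ← Nat.card_eq_finsetCard]
  exact Nat.card_congr <| (Equiv.subtypeEquivRight fun l => and_assoc.symm).trans <|
    (Equiv.subtypeSubtypeEquivSubtypeInter _ _).symm.trans <|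
      Equiv.subtypeEquiv (sortedListEquivSym α n) fun _ => by rw [mem_sym_iff]; rfl

theorem topWidth_append_singleton (l : List ℕ) (m : ℕ) : topWidth (l ++ [m]) = m :=
  List.getLastD_concat ..

theorem halfPerim_append_singleton (l : List ℕ) (m : ℕ) :
    halfPerim (l ++ [m]) = l.length + 1 + m := by
  simp [halfPerim, topWidth_append_singleton]

theorem isFerrers_append_singleton_iff {l : List ℕ} {m : ℕ} :
    IsFerrers (l ++ [m]) ↔ 0 < m ∧ l.Pairwise (· ≤ ·) ∧ ∀ x ∈ l, x ∈ Icc 1 m := by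
  simp only [IsFerrers, List.pairwise_append, List.pairwise_singleton, List.mem_singleton,
    List.mem_append, mem_Icc]
  constructor
  · rintro ⟨-, ⟨hl, -, hle⟩, hpos⟩
    exact ⟨hpos m (Or.inr rfl), hl, fun x hx => ⟨hpos x (Or.inl hx), hle x hx m rfl⟩⟩
  · rintro ⟨hm, hl, hmem⟩
    refine ⟨by simp, ⟨hl, trivial, fun x hx _ h => h ▸ (hmem x hx).2⟩, ?_⟩
    rintro x (hx | rfl)
    exacts [(hmem x hx).1, hm]

theorem IsFerrers.topWidth_pos_and_lt_halfPerim {l : List ℕ} (h : IsFerrers l) :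
    0 < topWidth l ∧ topWidth l < halfPerim l := by
  obtain rfl | ⟨l, m, rfl⟩ := l.eq_nil_or_concat'
  · exact absurd rfl h.1
  rw [topWidth_append_singleton, halfPerim_append_singleton]
  exact ⟨(isFerrers_append_singleton_iff.mp h).1, by omega⟩

theorem card_ferrers_eq_zero {a b : ℕ} (h : ¬(0 < a ∧ a < b)) :
    Nat.card {l : List ℕ // IsFerrers l ∧ topWidth l = a ∧ halfPerim l = b} = 0 := by
  have : IsEmpty {l : List ℕ // IsFerrers l ∧ topWidth l = a ∧ halfPerim l = b} :=
    ⟨fun ⟨_, hl, ha, hb⟩ => h (ha ▸ hb ▸ hl.topWidth_pos_and_lt_halfPerim)⟩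
  exact Nat.card_of_isEmpty

def addTopRow {m : ℕ} (hm : 0 < m) (n : ℕ) :
    {l : List ℕ // l.Pairwise (· ≤ ·) ∧ l.length = n ∧ ∀ x ∈ l, x ∈ Icc 1 m} →
      {l : List ℕ // IsFerrers l ∧ topWidth l = m ∧ halfPerim l = m + n + 1} :=
  fun l => ⟨l.1 ++ [m], isFerrers_append_singleton_iff.mpr ⟨hm, l.2.1, l.2.2.2⟩,
    topWidth_append_singleton .., by rw [halfPerim_append_singleton, l.2.2.1]; ring⟩

theorem addTopRow_bijective {m : ℕ} (hm : 0 < m) (n : ℕ) :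
    Function.Bijective (addTopRow hm n) := by
  refine ⟨fun l l' h => Subtype.ext (List.append_inj_left' (congrArg Subtype.val h) rfl), ?_⟩
  rintro ⟨l, hl, htop, hhalf⟩
  obtain rfl | ⟨l, b, rfl⟩ := l.eq_nil_or_concat'
  · exact absurd rfl hl.1
  rw [topWidth_append_singleton] at htop
  subst htop
  obtain ⟨-, hsorted, hmem⟩ := isFerrers_append_singleton_iff.mp hl
  rw [halfPerim_append_singleton] at hhalf
  exact ⟨⟨l, hsorted, by omega, hmem⟩, rfl⟩

theorem card_ferrers_eq_multichoose {m : ℕ} (hm : 0 < m) (n : ℕ) :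
    Nat.card {l : List ℕ // IsFerrers l ∧ topWidth l = m ∧ halfPerim l = m + n + 1}
      = m.multichoose n := by
  rw [← Nat.card_eq_of_bijective _ (addTopRow_bijective hm n), card_sortedList_eq_multichoose,
    Nat.card_Icc, Nat.add_sub_cancel]

theorem card_ferrers_eq_choose (a b : ℕ) :
    Nat.card {l : List ℕ // IsFerrers l ∧ topWidth l = a + 1 ∧ halfPerim l = b + 2}
      = b.choose a := by
  rcases le_or_gt a b with hab | hba
  · obtain ⟨n, rfl⟩ := Nat.exists_eq_add_of_le hab
    rw [show a + n + 2 = a + 1 + n + 1 by ring, card_ferrers_eq_multichoose a.succ_pos,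
      Nat.multichoose_eq, Nat.succ_add_sub_one, Nat.choose_symm_add]
  · rw [card_ferrers_eq_zero (by omega), Nat.choose_eq_zero_of_lt hba]

theorem MvPowerSeries.coeff_X_mul {σ R : Type*} [CommSemiring R] [DecidableEq σ] (s : σ)
    (φ : MvPowerSeries σ R) (e : σ →₀ ℕ) :
    coeff e (X s * φ) = if 1 ≤ e s then coeff (e - Finsupp.single s 1) φ else 0 := by
  rw [X, coeff_monomial_mul, one_mul]
  exact if_congr Finsupp.single_le_iff rfl rfl

noncomputable def pascalSeries (R : Type*) [CommRing R] : MvPowerSeries (Fin 2) R :=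
  fun e => ((e 1).choose (e 0) : R)

theorem one_sub_X_sub_X_mul_X_mul_pascalSeries (R : Type*) [CommRing R] :
    (1 - X 1 - X 0 * X 1) * pascalSeries R = 1 := by
  ext e
  rw [sub_mul, sub_mul, one_mul, mul_assoc, map_sub, map_sub, coeff_X_mul, coeff_X_mul,
    coeff_X_mul, coeff_one]
  simp only [coeff_apply, pascalSeries, Finsupp.coe_tsub, Pi.sub_apply, Finsupp.single_eq_same,
    ne_eq, zero_ne_one, one_ne_zero, not_false_eq_true, Finsupp.single_eq_of_ne, tsub_zero,
    Finsupp.ext_iff, Finsupp.coe_zero, Pi.zero_apply, Fin.forall_fin_two]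
  generalize e 0 = a, e 1 = b
  rcases a with _ | a <;> rcases b with _ | b <;> simp [Nat.choose_succ_succ]

theorem F_eq_X_mul_X_sq_mul_pascalSeries : F = X 0 * X 1 ^ 2 * pascalSeries ℚ := by
  ext e
  rw [sq, mul_assoc, mul_assoc, coeff_X_mul, coeff_X_mul, coeff_X_mul]
  simp only [coeff_apply, F, Finsupp.coe_tsub, Pi.sub_apply, ne_eq, one_ne_zero, zero_ne_one,
    not_false_eq_true, Finsupp.single_eq_of_ne, tsub_zero, Finsupp.single_eq_same, pascalSeries]
  generalize e 0 = a, e 1 = b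
  rcases a with _ | a <;> rcases b with _ | _ | b <;>
    simp [card_ferrers_eq_zero, card_ferrers_eq_choose]

theorem ferrers_gf :
    (1 - MvPowerSeries.X 1 - MvPowerSeries.X 0 * MvPowerSeries.X 1) * F
      = MvPowerSeries.X 0 * (MvPowerSeries.X 1 : MvPowerSeries (Fin 2) ℚ) ^ 2 ∧
    ∀ p m : ℕ, 2 ≤ p → 1 ≤ m → m ≤ p - 1 →
      Nat.card {l : List ℕ // IsFerrers l ∧ halfPerim l = p ∧ topWidth l = m}
        = (p - 2).choose (m - 1) := by
  refine ⟨?_, fun p m hp hm _ => ?_⟩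
  · rw [F_eq_X_mul_X_sq_mul_pascalSeries]
    linear_combination X 0 * X 1 ^ 2 * one_sub_X_sub_X_mul_X_mul_pascalSeries ℚ
  · obtain ⟨a, rfl⟩ : ∃ a, m = a + 1 := ⟨m - 1, by omega⟩
    obtain ⟨b, rfl⟩ : ∃ b, p = b + 2 := ⟨p - 2, by omega⟩
    rw [Nat.add_sub_cancel, Nat.add_sub_cancel, ← card_ferrers_eq_choose]
    exact Nat.card_congr (Equiv.subtypeEquivRight fun _ => and_congr_right' and_comm)
end

section
/- For every integer a ≥ 1, the following polynomial identity holds in ℚ[x₁, x₂, x₃]: (x₁−x₂)(x₁−x₃)(x₂−x₃) · Σ_{b₁=1}^{a−2} Σ_{b₂=1}^{a−1−b₁} x₁^{b₁} x₂^{b₂} x₃^{a−b₁−b₂} = x₁^{a−1} x₂² x₃ (x₁−x₃) − x₁^{a−1} x₂ x₃² (x₁−x₂) − x₁ x₂^a x₃ (x₁−x₃) + x₁ x₂ x₃^a (x₁−x₂), where empty sums (which occur when a ≤ 2) are interpreted as 0. -/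
open MvPolynomial Finset

/-!
Multiplying by `x₂ - x₃` telescopes the geometric sum over `b₂`, collapsing the inner sum
to `x₂ x₃ x₁^b₁ (x₂^(a-1-b₁) - x₃^(a-1-b₁))`. What remains are two geometric sums over `b₁`,
which are collapsed in the same way by `x₁ - x₂` and `x₁ - x₃`. For `a = 1` both sides vanish.
-/

section

variable {R : Type*} [CommRing R]

theorem sum_Icc_pow_mul_pow_eq_mul_geom_sum₂ (y z : R) (n : ℕ) :
    ∑ b ∈ Icc 1 n, y ^ b * z ^ (n + 1 - b)
      = y * z * ∑ i ∈ range n, y ^ i * z ^ (n - 1 - i) := by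
  rw [← Ico_add_one_right_eq_Icc, sum_Ico_eq_sum_range, add_tsub_cancel_right, mul_sum]
  refine sum_congr rfl fun i hi => ?_
  rw [show n + 1 - (1 + i) = n - 1 - i + 1 by grind]
  ring

theorem sub_mul_sum_Icc_pow_mul_pow (y z : R) (n : ℕ) :
    (y - z) * ∑ b ∈ Icc 1 n, y ^ b * z ^ (n + 1 - b) = y * z * (y ^ n - z ^ n) := by
  rw [sum_Icc_pow_mul_pow_eq_mul_geom_sum₂, ← geom_sum₂_mul]
  ring

theorem sub_mul_sum_Icc_pow_mul_pow_mul_pow (x y z : R) {n b₁ : ℕ} (hb₁ : b₁ ≤ n) :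
    (y - z) * ∑ b₂ ∈ Icc 1 (n + 1 - b₁), x ^ b₁ * y ^ b₂ * z ^ (n + 2 - b₁ - b₂)
      = y * z * (x ^ b₁ * y ^ (n + 1 - b₁) - x ^ b₁ * z ^ (n + 1 - b₁)) := by
  have hsum : ∑ b₂ ∈ Icc 1 (n + 1 - b₁), x ^ b₁ * y ^ b₂ * z ^ (n + 2 - b₁ - b₂)
      = x ^ b₁ * ∑ b₂ ∈ Icc 1 (n + 1 - b₁), y ^ b₂ * z ^ (n + 1 - b₁ + 1 - b₂) := by
    rw [mul_sum]
    refine sum_congr rfl fun b₂ _ => ?_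
    rw [show n + 2 - b₁ - b₂ = n + 1 - b₁ + 1 - b₂ by omega, mul_assoc]
  rw [hsum]
  linear_combination x ^ b₁ * sub_mul_sum_Icc_pow_mul_pow y z (n + 1 - b₁)

theorem vandermonde_mul_sum_compositions (x y z : R) (n : ℕ) :
    (x - y) * (x - z) * (y - z) *
      ∑ b₁ ∈ Icc 1 n, ∑ b₂ ∈ Icc 1 (n + 1 - b₁), x ^ b₁ * y ^ b₂ * z ^ (n + 2 - b₁ - b₂)
    = x ^ (n + 1) * y ^ 2 * z * (x - z) - x ^ (n + 1) * y * z ^ 2 * (x - y)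
      - x * y ^ (n + 2) * z * (x - z) + x * y * z ^ (n + 2) * (x - y) := by
  have hinner : (y - z) * ∑ b₁ ∈ Icc 1 n, ∑ b₂ ∈ Icc 1 (n + 1 - b₁),
        x ^ b₁ * y ^ b₂ * z ^ (n + 2 - b₁ - b₂)
      = y * z * (∑ b ∈ Icc 1 n, x ^ b * y ^ (n + 1 - b)
          - ∑ b ∈ Icc 1 n, x ^ b * z ^ (n + 1 - b)) := by
    rw [mul_sum, ← sum_sub_distrib, mul_sum]
    exact sum_congr rfl fun b₁ hb₁ =>
      sub_mul_sum_Icc_pow_mul_pow_mul_pow x y z (mem_Icc.mp hb₁).2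
  linear_combination (x - y) * (x - z) * hinner
    + (x - z) * y * z * sub_mul_sum_Icc_pow_mul_pow x y n
    - (x - y) * y * z * sub_mul_sum_Icc_pow_mul_pow x z n

end

/-- The closed-form evaluation of the double sum arising in the umbral operator `U₁`
(start of the gate/wicket), as a polynomial identity in `ℚ[x₁,x₂,x₃]`
(here `x₁ = X 0`, `x₂ = X 1`, `x₃ = X 2`). -/
theorem U1_sum_closed_form (a : ℕ) (ha : 1 ≤ a) :
    (X 0 - X 1) * (X 0 - X 2) * (X 1 - X 2) *
      ∑ b₁ ∈ Finset.Icc 1 (a - 2), ∑ b₂ ∈ Finset.Icc 1 (a - 1 - b₁),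
        (X 0 : MvPolynomial (Fin 3) ℚ) ^ b₁ * X 1 ^ b₂ * X 2 ^ (a - b₁ - b₂)
    = X 0 ^ (a - 1) * X 1 ^ 2 * X 2 * (X 0 - X 2)
      - X 0 ^ (a - 1) * X 1 * X 2 ^ 2 * (X 0 - X 1)
      - X 0 * X 1 ^ a * X 2 * (X 0 - X 2)
      + X 0 * X 1 * X 2 ^ a * (X 0 - X 1) := by
  obtain rfl | ⟨n, rfl⟩ : a = 1 ∨ ∃ n, a = n + 2 := by
    rcases a with _ | _ | n <;> simp_all
  · rw [Icc_eq_empty (by decide), sum_empty]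
    ring
  · rw [show n + 2 - 2 = n by omega, show n + 2 - 1 = n + 1 by omega]
    exact vandermonde_mul_sum_compositions _ _ _ n
end

section
/- Let φ₁₂₃(x₁,x₂,x₃,t) = Σ x₁^s x₂^(w_k) x₃^(m_n − s − w_k) t^(n + m_n + k), the sum ranging over all gated Ferrers diagrams, and let ψ₁(x,t) = Σ x^(m_n) t^(n + m_n + k + w_k), the sum ranging over all wicketed Ferrers diagrams, both regarded as formal power series in t with coefficients in polynomial rings over ℚ. Then (1 − x t) · ψ₁(x,t) = t · φ₁₂₃(x, t·x, x, t) + t · ψ₁(x,t), where φ₁₂₃(x, t·x, x, t) denotes the series obtained by substituting x₁ = x, x₂ = t·x, x₃ = x. -/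
/-- 1-indexed access to the entries of a list (`row l i = m_i`). -/
def row (l : List ℕ) (i : ℕ) : ℕ := l.getD (i - 1) 0

/-- `IsGated l g s`: the Ferrers diagram `l = (m_1,…,m_n)` (with `n ≥ 2`) carries a gate
with widths `g = (w_1,…,w_k)` (`1 ≤ k ≤ n-1`, `w_1 ≤ … ≤ w_k` positive) at offset
`s ≥ 1`, removing from row `n-k+j` the blocks in columns `s+1,…,s+w_j` for `j = 1,…,k`,
subject to `s + w_1 + 1 ≤ m_{n-k}`, `s + w_j + 1 ≤ m_{n-k+j}` for `j = 1,…,k`, and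
`s + w_{j+1} + 1 ≤ m_{n-k+j}` for `j = 1,…,k-1`. -/
def IsGated (l g : List ℕ) (s : ℕ) : Prop :=
  IsFerrers l ∧ 2 ≤ l.length ∧
  g ≠ [] ∧ g.Pairwise (· ≤ ·) ∧ (∀ x ∈ g, 0 < x) ∧ g.length ≤ l.length - 1 ∧
  1 ≤ s ∧
  s + row g 1 + 1 ≤ row l (l.length - g.length) ∧
  (∀ j, 1 ≤ j → j ≤ g.length → s + row g j + 1 ≤ row l (l.length - g.length + j)) ∧
  (∀ j, 1 ≤ j → j ≤ g.length - 1 → s + row g (j + 1) + 1 ≤ row l (l.length - g.length + j))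

/-- Half-perimeter of a gated Ferrers diagram: `n + m_n + k`. -/
def gatedHP (l g : List ℕ) : ℕ := l.length + topWidth l + g.length

/-- `IsWicketed l g i₀ s`: the Ferrers diagram `l = (m_1,…,m_n)` carries a wicket with
widths `g = (w_1,…,w_k)` (`k ≥ 1`, `w_1 ≤ … ≤ w_k` positive) starting above row `i₀ ≥ 1`
(with `i₀ + k ≤ n - 1`) at offset `s ≥ 1`, removing from row `i₀+j` the blocks in columns
`s+1,…,s+w_j` for `j = 1,…,k`, subject to `s + w_1 + 1 ≤ m_{i₀}`,
`s + w_j + 1 ≤ m_{i₀+j}` for `j = 1,…,k`, and `s + w_{j+1} + 1 ≤ m_{i₀+j}` for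
`j = 1,…,k-1`. -/
def IsWicketed (l g : List ℕ) (i₀ s : ℕ) : Prop :=
  IsFerrers l ∧
  g ≠ [] ∧ g.Pairwise (· ≤ ·) ∧ (∀ x ∈ g, 0 < x) ∧
  1 ≤ i₀ ∧ i₀ + g.length ≤ l.length - 1 ∧ 1 ≤ s ∧
  s + row g 1 + 1 ≤ row l i₀ ∧
  (∀ j, 1 ≤ j → j ≤ g.length → s + row g j + 1 ≤ row l (i₀ + j)) ∧
  (∀ j, 1 ≤ j → j ≤ g.length - 1 → s + row g (j + 1) + 1 ≤ row l (i₀ + j))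

/-- Half-perimeter of a wicketed Ferrers diagram: `n + m_n + k + w_k`. -/
def wicketedHP (l g : List ℕ) : ℕ := l.length + topWidth l + g.length + topWidth g

/-- `φ₁₂₃(x, t·x, x, t) = Σ x^(m_n) t^(n + m_n + k + w_k)` over all gated Ferrers
diagrams: the series obtained from `φ₁₂₃(x₁,x₂,x₃,t)` by substituting `x₁ = x`,
`x₂ = t·x`, `x₃ = x`. -/
noncomputable def phi123Sub : PowerSeries (Polynomial ℚ) :=
  PowerSeries.mk fun p =>
    ∑ m ∈ Finset.range (p + 1),
      (Nat.card {v : List ℕ × List ℕ × ℕ // IsGated v.1 v.2.1 v.2.2 ∧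
          gatedHP v.1 v.2.1 + topWidth v.2.1 = p ∧ topWidth v.1 = m} : Polynomial ℚ) *
        Polynomial.X ^ m

/-- `ψ₁(x,t) = Σ x^(m_n) t^(n + m_n + k + w_k)` over all wicketed Ferrers diagrams. -/
noncomputable def psi1 : PowerSeries (Polynomial ℚ) :=
  PowerSeries.mk fun p =>
    ∑ m ∈ Finset.range (p + 1),
      (Nat.card {v : List ℕ × List ℕ × ℕ × ℕ // IsWicketed v.1 v.2.1 v.2.2.1 v.2.2.2 ∧
          wicketedHP v.1 v.2.1 = p ∧ topWidth v.1 = m} : Polynomial ℚ) *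
        Polynomial.X ^ m

/-!
The wicket never reaches the top row, so classify a wicketed diagram by that row. If
`m_n > m_{n-1}`, removing one block from the top row leaves a wicketed diagram with
half-perimeter and `m_n` both one smaller: the term `x t ψ₁`. Otherwise the top row is a copy of
row `n - 1` and can be deleted, which lowers `n`, hence the half-perimeter, by one and keeps
`m_n`. What remains is a wicketed diagram if the wicket ends below row `n - 1` (the term `t ψ₁`),
and otherwise a gated diagram whose gate is the old wicket, with `w_k` now counted in the
exponent of `t` (the term `t φ₁₂₃(x, t x, x, t)`).
-/

lemma topWidth_concat (l : List ℕ) (a : ℕ) : topWidth (l ++ [a]) = a :=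
  List.getLastD_concat

lemma topWidth_eq_getLast {l : List ℕ} (hl : l ≠ []) : topWidth l = l.getLast hl := by
  simp [topWidth, List.getLast?_eq_some_getLast hl]

lemma topWidth_mem {l : List ℕ} (hl : l ≠ []) : topWidth l ∈ l :=
  topWidth_eq_getLast hl ▸ List.getLast_mem hl

lemma le_topWidth_of_mem {l : List ℕ} (hl : l.Pairwise (· ≤ ·)) {x : ℕ} (hx : x ∈ l) :
    x ≤ topWidth l := by
  rw [topWidth_eq_getLast (List.ne_nil_of_mem hx)]
  exact hl.rel_getLast hx

lemma row_append_left {l : List ℕ} (r : List ℕ) {i : ℕ} (h₁ : 1 ≤ i) (h₂ : i ≤ l.length) :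
    row (l ++ r) i = row l i :=
  List.getD_append l r 0 (i - 1) (by omega)

lemma row_le_of_forall_le {l : List ℕ} {B : ℕ} (h : ∀ x ∈ l, x ≤ B) (i : ℕ) : row l i ≤ B := by
  rw [row, List.getD_eq_getElem?_getD]
  cases hi : l[i - 1]? with
  | none => exact Nat.zero_le B
  | some x => exact h x (List.mem_of_getElem? hi)

lemma isFerrers_concat_iff {l : List ℕ} (hl : l ≠ []) {a : ℕ} :
    IsFerrers (l ++ [a]) ↔ IsFerrers l ∧ topWidth l ≤ a := by
  have htop := topWidth_mem hl
  simp only [IsFerrers, ne_eq, List.append_eq_nil_iff, List.cons_ne_nil, and_false,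
    not_false_eq_true, List.pairwise_append, List.pairwise_singleton, List.mem_singleton,
    forall_eq, true_and, List.mem_append, or_imp, forall_and, hl]
  constructor
  · rintro ⟨⟨hs, hle⟩, hpos, ha⟩
    exact ⟨⟨hs, hpos⟩, hle _ htop⟩
  · rintro ⟨⟨hs, hpos⟩, ha⟩
    exact ⟨⟨hs, fun x hx => (le_topWidth_of_mem hs hx).trans ha⟩, hpos,
      (hpos _ htop).trans_le ha⟩

lemma IsFerrers.topWidth_pos {l : List ℕ} (h : IsFerrers l) : 0 < topWidth l :=
  h.2.2 _ (topWidth_mem h.1)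

lemma finite_setOf_length_le_forall_le (L B : ℕ) :
    {l : List ℕ | l.length ≤ L ∧ ∀ x ∈ l, x ≤ B}.Finite := by
  refine ((List.finite_length_le (Fin (B + 1)) L).image (List.map Fin.val)).subset ?_
  rintro l ⟨hL, hB⟩
  lift l to List (Fin (B + 1)) using fun x hx => Nat.lt_succ_of_le (hB x hx)
  exact ⟨l, by simpa using hL, rfl⟩

/-- The inequalities constraining a wicket on row `i₀`; a gate is a wicket on row `n - k`. -/
def WicketFits (l g : List ℕ) (i₀ s : ℕ) : Prop :=
  s + row g 1 + 1 ≤ row l i₀ ∧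
  (∀ j, 1 ≤ j → j ≤ g.length → s + row g j + 1 ≤ row l (i₀ + j)) ∧
  (∀ j, 1 ≤ j → j ≤ g.length - 1 → s + row g (j + 1) + 1 ≤ row l (i₀ + j))

lemma wicketFits_append_iff {l g : List ℕ} (r : List ℕ) {i₀ s : ℕ} (h₁ : 1 ≤ i₀)
    (h₂ : i₀ + g.length ≤ l.length) : WicketFits (l ++ r) g i₀ s ↔ WicketFits l g i₀ s := by
  have hrow : ∀ j ≤ g.length, row (l ++ r) (i₀ + j) = row l (i₀ + j) := fun j hj =>
    row_append_left r (by omega) (by omega)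
  unfold WicketFits
  refine and_congr (by rw [row_append_left r h₁ (by omega)]) (and_congr ?_ ?_) <;>
    refine forall₃_congr fun j _ hj => ?_ <;> rw [hrow j (by omega)]

lemma isWicketed_iff {l g : List ℕ} {i₀ s : ℕ} :
    IsWicketed l g i₀ s ↔ IsFerrers l ∧ IsFerrers g ∧ 1 ≤ i₀ ∧ i₀ + g.length + 1 ≤ l.length ∧
      1 ≤ s ∧ WicketFits l g i₀ s := by
  unfold IsWicketed IsFerrers WicketFits
  constructor
  · rintro ⟨hl, hg₁, hg₂, hg₃, hi, hk, hs, hfits⟩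
    exact ⟨hl, ⟨hg₁, hg₂, hg₃⟩, hi, by omega, hs, hfits⟩
  · rintro ⟨hl, ⟨hg₁, hg₂, hg₃⟩, hi, hk, hs, hfits⟩
    exact ⟨hl, hg₁, hg₂, hg₃, hi, by omega, hs, hfits⟩

lemma isGated_iff {l g : List ℕ} {s : ℕ} :
    IsGated l g s ↔ IsFerrers l ∧ IsFerrers g ∧ g.length + 1 ≤ l.length ∧ 1 ≤ s ∧
      WicketFits l g (l.length - g.length) s := by
  unfold IsGated IsFerrers WicketFits
  constructor
  · rintro ⟨hl, hn, hg₁, hg₂, hg₃, hk, hs, hfits⟩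
    exact ⟨hl, ⟨hg₁, hg₂, hg₃⟩, by omega, hs, hfits⟩
  · rintro ⟨hl, ⟨hg₁, hg₂, hg₃⟩, hk, hs, hfits⟩
    have := List.length_pos_iff.2 hg₁
    exact ⟨hl, by omega, hg₁, hg₂, hg₃, by omega, hs, hfits⟩

lemma isWicketed_concat_iff {l g : List ℕ} {a i₀ s : ℕ} :
    IsWicketed (l ++ [a]) g i₀ s ↔ IsFerrers l ∧ topWidth l ≤ a ∧ IsFerrers g ∧ 1 ≤ i₀ ∧
      i₀ + g.length ≤ l.length ∧ 1 ≤ s ∧ WicketFits l g i₀ s := by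
  rcases eq_or_ne l [] with rfl | hl
  · refine iff_of_false (fun hw => ?_) (fun h => h.1.1 rfl)
    obtain ⟨-, -, hi, hk, -⟩ := isWicketed_iff.1 hw
    rw [List.nil_append, List.length_singleton] at hk
    omega
  rw [isWicketed_iff, isFerrers_concat_iff hl, List.length_append, List.length_singleton,
    Nat.add_le_add_iff_right]
  constructor
  · rintro ⟨⟨hl, ha⟩, hg, hi, hk, hs, hfits⟩
    exact ⟨hl, ha, hg, hi, hk, hs, (wicketFits_append_iff _ hi hk).1 hfits⟩
  · rintro ⟨hl, ha, hg, hi, hk, hs, hfits⟩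
    exact ⟨⟨hl, ha⟩, hg, hi, hk, hs, (wicketFits_append_iff _ hi hk).2 hfits⟩

lemma isWicketed_concat_iff_of_lt {l g : List ℕ} {a i₀ s : ℕ} (h : i₀ + g.length < l.length) :
    IsWicketed (l ++ [a]) g i₀ s ↔ IsWicketed l g i₀ s ∧ topWidth l ≤ a := by
  rw [isWicketed_concat_iff, isWicketed_iff]
  constructor
  · rintro ⟨hl, ha, hg, hi, -, hs, hfits⟩
    exact ⟨⟨hl, hg, hi, h, hs, hfits⟩, ha⟩
  · rintro ⟨⟨hl, hg, hi, -, hs, hfits⟩, ha⟩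
    exact ⟨hl, ha, hg, hi, h.le, hs, hfits⟩

lemma isWicketed_concat_iff_isGated {l g : List ℕ} {a s : ℕ} :
    IsWicketed (l ++ [a]) g (l.length - g.length) s ↔ IsGated l g s ∧ topWidth l ≤ a := by
  rw [isWicketed_concat_iff, isGated_iff]
  constructor
  · rintro ⟨hl, ha, hg, hi, -, hs, hfits⟩
    exact ⟨⟨hl, hg, by omega, hs, hfits⟩, ha⟩
  · rintro ⟨⟨hl, hg, hk, hs, hfits⟩, ha⟩
    exact ⟨hl, ha, hg, by omega, by omega, hs, hfits⟩

lemma wicketedHP_concat (l g : List ℕ) (a : ℕ) :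
    wicketedHP (l ++ [a]) g = l.length + 1 + a + g.length + topWidth g := by
  simp [wicketedHP, topWidth_concat]

lemma ncard_setOf_concat {β : Type*} (P : List ℕ → β → Prop) (hP : ∀ b, ¬ P [] b) (a : ℕ) :
    {v : List ℕ × β | P (v.1 ++ [a]) v.2}.ncard =
      {v : List ℕ × β | P v.1 v.2 ∧ topWidth v.1 = a}.ncard := by
  have hinj : Function.Injective fun v : List ℕ × β => (v.1 ++ [a], v.2) := by
    intro v w h
    simp only [Prod.mk.injEq, List.append_cancel_right_eq] at h
    exact Prod.ext h.1 h.2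
  rw [← Set.ncard_image_of_injective _ hinj]
  congr 1
  ext ⟨l, b⟩
  constructor
  · rintro ⟨⟨l', b'⟩, hP', h⟩
    simp only [Prod.mk.injEq] at h
    obtain ⟨rfl, rfl⟩ := h
    exact ⟨hP', topWidth_concat _ _⟩
  · rintro ⟨hPl, ha⟩
    obtain rfl | ⟨l', a', rfl⟩ := l.eq_nil_or_concat'
    · exact absurd hPl (hP b)
    · rw [topWidth_concat] at ha
      subst ha
      exact ⟨(l', b), hPl, rfl⟩

def wicketedSet (p m : ℕ) : Set (List ℕ × List ℕ × ℕ × ℕ) :=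
  {v | IsWicketed v.1 v.2.1 v.2.2.1 v.2.2.2 ∧ wicketedHP v.1 v.2.1 = p ∧ topWidth v.1 = m}

def gatedSet (p m : ℕ) : Set (List ℕ × List ℕ × ℕ) :=
  {v | IsGated v.1 v.2.1 v.2.2 ∧ gatedHP v.1 v.2.1 + topWidth v.2.1 = p ∧ topWidth v.1 = m}

def wicketedPrefixes (p a : ℕ) : Set (List ℕ × List ℕ × ℕ × ℕ) :=
  {v | IsWicketed (v.1 ++ [a]) v.2.1 v.2.2.1 v.2.2.2 ∧ wicketedHP (v.1 ++ [a]) v.2.1 = p}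

lemma ncard_wicketedPrefixes (p a : ℕ) :
    (wicketedPrefixes p a).ncard = (wicketedSet p a).ncard := by
  unfold wicketedPrefixes wicketedSet
  have := ncard_setOf_concat
    (fun l (v : List ℕ × ℕ × ℕ) => IsWicketed l v.1 v.2.1 v.2.2 ∧ wicketedHP l v.1 = p)
    (fun _ h => by simp [isWicketed_iff] at h) a
  simpa only [and_assoc] using this

lemma wicketedPrefixes_finite (p a : ℕ) : (wicketedPrefixes p a).Finite := by
  refine ((finite_setOf_length_le_forall_le p p).prod ((finite_setOf_length_le_forall_le p p).prod
    ((Set.finite_Iic p).prod (Set.finite_Iic p)))).subset ?_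
  rintro ⟨l, g, i₀, s⟩ ⟨hw, hp⟩
  dsimp only at hw hp
  rw [isWicketed_concat_iff] at hw
  obtain ⟨hl, ha, hg, hi, hk, hs, hfits, -⟩ := hw
  rw [wicketedHP_concat] at hp
  have hl_le : ∀ x ∈ l, x ≤ p := fun x hx => (le_topWidth_of_mem hl.2.1 hx).trans (by omega)
  have hg_le : ∀ x ∈ g, x ≤ p := fun x hx => (le_topWidth_of_mem hg.2.1 hx).trans (by omega)
  have hs_le : s + row g 1 + 1 ≤ p := hfits.trans (row_le_of_forall_le hl_le i₀)
  simp only [Set.mem_prod, Set.mem_ofPred_eq, Set.mem_Iic]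
  exact ⟨⟨by omega, hl_le⟩, ⟨by omega, hg_le⟩, by omega, by omega⟩

lemma wicketedPrefixes_succ_inter_topWidth_le (q m : ℕ) :
    wicketedPrefixes (q + 1) (m + 1) ∩ {v | topWidth v.1 ≤ m} = wicketedPrefixes q m := by
  ext ⟨l, g, i₀, s⟩
  simp only [wicketedPrefixes, Set.mem_inter_iff, Set.mem_ofPred_eq, isWicketed_concat_iff,
    wicketedHP_concat]
  constructor
  · rintro ⟨⟨⟨hl, -, hrest⟩, hp⟩, ha⟩
    exact ⟨⟨hl, ha, hrest⟩, by omega⟩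
  · rintro ⟨⟨hl, ha, hrest⟩, hp⟩
    exact ⟨⟨⟨hl, by omega, hrest⟩, by omega⟩, ha⟩

def wicketedPrefixesDoubledTop (p m : ℕ) : Set (List ℕ × List ℕ × ℕ × ℕ) :=
  {v | IsWicketed (v.1 ++ [topWidth v.1]) v.2.1 v.2.2.1 v.2.2.2 ∧ wicketedHP v.1 v.2.1 = p ∧
    topWidth v.1 = m}

lemma wicketedPrefixes_succ_sdiff_topWidth_le (q m : ℕ) :
    wicketedPrefixes (q + 1) (m + 1) \ {v | topWidth v.1 ≤ m} =
      wicketedPrefixesDoubledTop q (m + 1) := by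
  ext ⟨l, g, i₀, s⟩
  simp only [wicketedPrefixes, wicketedPrefixesDoubledTop, Set.mem_sdiff, Set.mem_ofPred_eq,
    wicketedHP_concat]
  unfold wicketedHP
  constructor
  · rintro ⟨⟨hw, hp⟩, ha⟩
    obtain ⟨-, hle, -⟩ := isWicketed_concat_iff.1 hw
    have htop : topWidth l = m + 1 := by omega
    exact ⟨htop ▸ hw, by omega, htop⟩
  · rintro ⟨hw, hp, htop⟩
    exact ⟨⟨htop ▸ hw, by omega⟩, by omega⟩

lemma wicketedPrefixesDoubledTop_inter (p m : ℕ) :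
    wicketedPrefixesDoubledTop p m ∩ {v | v.2.2.1 + v.2.1.length < v.1.length} =
      wicketedSet p m := by
  ext ⟨l, g, i₀, s⟩
  simp only [wicketedPrefixesDoubledTop, wicketedSet, Set.mem_inter_iff, Set.mem_ofPred_eq]
  constructor
  · rintro ⟨⟨hw, hp, htop⟩, hlt⟩
    exact ⟨((isWicketed_concat_iff_of_lt hlt).1 hw).1, hp, htop⟩
  · rintro ⟨hw, hp, htop⟩
    obtain ⟨-, -, -, hk, -⟩ := isWicketed_iff.1 hw
    have hlt : i₀ + g.length < l.length := by omega
    exact ⟨⟨(isWicketed_concat_iff_of_lt hlt).2 ⟨hw, le_rfl⟩, hp, htop⟩, hlt⟩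

lemma wicketedPrefixesDoubledTop_sdiff (p m : ℕ) :
    wicketedPrefixesDoubledTop p m \ {v | v.2.2.1 + v.2.1.length < v.1.length} =
      (fun u => (u.1, u.2.1, u.1.length - u.2.1.length, u.2.2)) '' gatedSet p m := by
  ext ⟨l, g, i₀, s⟩
  simp only [wicketedPrefixesDoubledTop, gatedSet, Set.mem_sdiff, Set.mem_ofPred_eq, Set.mem_image,
    Prod.exists, Prod.mk.injEq]
  constructor
  · rintro ⟨⟨hw, hp, htop⟩, hge⟩
    obtain ⟨-, -, -, -, hk, -⟩ := isWicketed_concat_iff.1 hw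
    have hi : i₀ = l.length - g.length := by omega
    subst hi
    exact ⟨l, g, s, ⟨(isWicketed_concat_iff_isGated.1 hw).1, hp, htop⟩, rfl, rfl, rfl, rfl⟩
  · rintro ⟨l, g, s, ⟨hg, hp, htop⟩, rfl, rfl, rfl, rfl⟩
    exact ⟨⟨isWicketed_concat_iff_isGated.2 ⟨hg, le_rfl⟩, hp, htop⟩, by omega⟩

lemma ncard_wicketedSet_succ_succ (q m : ℕ) :
    (wicketedSet (q + 1) (m + 1)).ncard =
      (gatedSet q (m + 1)).ncard + (wicketedSet q (m + 1)).ncard + (wicketedSet q m).ncard := by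
  have hinj : Function.Injective fun u : List ℕ × List ℕ × ℕ =>
      (u.1, u.2.1, u.1.length - u.2.1.length, u.2.2) := by
    rintro ⟨l, g, s⟩ ⟨l', g', s'⟩ h
    simp only [Prod.mk.injEq] at h
    obtain ⟨rfl, rfl, -, rfl⟩ := h
    rfl
  have hsplit_top := Set.ncard_inter_add_ncard_sdiff_eq_ncard (wicketedPrefixes (q + 1) (m + 1))
    {v | topWidth v.1 ≤ m} (wicketedPrefixes_finite _ _)
  have hfin : (wicketedPrefixesDoubledTop q (m + 1)).Finite :=
    wicketedPrefixes_succ_sdiff_topWidth_le q m ▸ (wicketedPrefixes_finite _ _).sdiff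
  have hsplit_gate := Set.ncard_inter_add_ncard_sdiff_eq_ncard
    (wicketedPrefixesDoubledTop q (m + 1)) {v | v.2.2.1 + v.2.1.length < v.1.length} hfin
  rw [wicketedPrefixes_succ_inter_topWidth_le,
    wicketedPrefixes_succ_sdiff_topWidth_le] at hsplit_top
  rw [wicketedPrefixesDoubledTop_inter, wicketedPrefixesDoubledTop_sdiff,
    Set.ncard_image_of_injective _ hinj] at hsplit_gate
  rw [← ncard_wicketedPrefixes, ← ncard_wicketedPrefixes q m, ← hsplit_top, ← hsplit_gate]
  ring

lemma wicketedSet_zero_right (p : ℕ) : wicketedSet p 0 = ∅ :=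
  Set.eq_empty_of_forall_notMem fun _ ⟨hw, _, htop⟩ => hw.1.topWidth_pos.ne' htop

lemma gatedSet_zero_right (p : ℕ) : gatedSet p 0 = ∅ :=
  Set.eq_empty_of_forall_notMem fun _ ⟨hg, _, htop⟩ => hg.1.topWidth_pos.ne' htop

lemma wicketedSet_eq_empty_of_le {p m : ℕ} (h : p ≤ m) : wicketedSet p m = ∅ := by
  refine Set.eq_empty_of_forall_notMem fun v ⟨hw, hp, htop⟩ => ?_
  obtain ⟨-, -, -, hk, -⟩ := isWicketed_iff.1 hw
  unfold wicketedHP at hp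
  omega

lemma gatedSet_eq_empty_of_lt {p m : ℕ} (h : p < m) : gatedSet p m = ∅ := by
  refine Set.eq_empty_of_forall_notMem fun v ⟨_, hp, htop⟩ => ?_
  unfold gatedHP at hp
  omega

open Polynomial in
lemma coeff_sum_range_natCast_mul_X_pow {R : Type*} [Semiring R] {c : ℕ → ℕ} {p : ℕ}
    (hc : ∀ m, p < m → c m = 0) (m : ℕ) :
    (∑ i ∈ Finset.range (p + 1), (c i : R[X]) * X ^ i).coeff m = (c m : R) := by
  simp +contextual [Polynomial.finsetSum_coeff, Polynomial.coeff_X_pow, hc]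

lemma coeff_coeff_psi1 (p m : ℕ) :
    (PowerSeries.coeff p psi1).coeff m = (wicketedSet p m).ncard := by
  rw [psi1, PowerSeries.coeff_mk]
  exact coeff_sum_range_natCast_mul_X_pow (c := fun m => (wicketedSet p m).ncard)
    (fun m h => by rw [wicketedSet_eq_empty_of_le h.le, Set.ncard_empty]) m

lemma coeff_coeff_phi123Sub (p m : ℕ) :
    (PowerSeries.coeff p phi123Sub).coeff m = (gatedSet p m).ncard := by
  rw [phi123Sub, PowerSeries.coeff_mk]
  exact coeff_sum_range_natCast_mul_X_pow (c := fun m => (gatedSet p m).ncard)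
    (fun m h => by rw [gatedSet_eq_empty_of_lt h, Set.ncard_empty]) m

open PowerSeries in
/-- The umbral evolution equation `ψ₁ = U₃(φ₁₂₃) + U₀(ψ₁)` for wicketed Ferrers
diagrams, cleared of the denominator `1 - x t`:
`(1 - x t) ψ₁(x,t) = t φ₁₂₃(x, t x, x, t) + t ψ₁(x,t)`. -/
theorem wicketed_umbral_equation :
    let t : PowerSeries (Polynomial ℚ) := PowerSeries.X
    let x : PowerSeries (Polynomial ℚ) := PowerSeries.C Polynomial.X
    (1 - x * t) * psi1 = t * phi123Sub + t * psi1 := by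
  intro t x
  have key : psi1 = X * phi123Sub + X * psi1 + C Polynomial.X * (X * psi1) := by
    ext (_ | q) m
    · rw [coeff_coeff_psi1, wicketedSet_eq_empty_of_le m.zero_le]
      simp
    · rcases m with _ | m <;>
        simp [coeff_coeff_psi1, coeff_coeff_phi123Sub, wicketedSet_zero_right, gatedSet_zero_right,
          ncard_wicketedSet_succ_succ]
  linear_combination key
end
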